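/- arXiv:1108.0344 — 3 statements merged into one kernel-verified Lean document; each statement's English description precedes it below -/
import Mathlib

section
/- For every p ∈ (1,2) there is a constant C(p) > 0 such that: if r, g : 2ℤ → [0,∞) satisfy Σ_{k∈2ℤ} r(k)^p < ∞ and Σ_{k∈2ℤ} g(k)² < ∞, then for every even N ∈ 2ℕ one has σ₁(N) ≤ C(p)·‖r‖_p·‖g‖ and σ₂(N) ≤ C(p)·‖r‖_p·‖g‖. -/
open scoped BigOperators

/-- `σ₁(N) = Σ_{k∈2ℤ, |k|≤N} Σ_{j∈2ℤ, |j|>N} r(j+k)·g(k)/|j−k|`. -/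
noncomputable def sigma1 (r g : ℤ → ℝ) (N : ℤ) : ℝ :=
  ∑' p : ℤ × ℤ, if Even p.1 ∧ Even p.2 ∧ |p.1| ≤ N ∧ N < |p.2|
    then r (p.2 + p.1) * g p.1 / (|p.2 - p.1| : ℤ) else 0

/-- `σ₂(N) = Σ_{k∈2ℤ, |k|>N} Σ_{j∈2ℤ, |j|≤N} r(j+k)·g(k)/|k−j|`. -/
noncomputable def sigma2 (r g : ℤ → ℝ) (N : ℤ) : ℝ :=
  ∑' p : ℤ × ℤ, if Even p.1 ∧ Even p.2 ∧ N < |p.1| ∧ |p.2| ≤ N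
    then r (p.2 + p.1) * g p.1 / (|p.1 - p.2| : ℤ) else 0

/-- `‖x‖ = (Σ_{k∈2ℤ} x(k)²)^{1/2}`. -/
noncomputable def evenL2Norm (x : ℤ → ℝ) : ℝ :=
  Real.sqrt (∑' k : ℤ, if Even k then x k ^ 2 else 0)

/-- `‖x‖_p = (Σ_{k∈2ℤ} x(k)^p)^{1/p}`. -/
noncomputable def evenLpNorm (x : ℤ → ℝ) (p : ℝ) : ℝ :=
  (∑' k : ℤ, if Even k then x k ^ p else 0) ^ (1 / p)

open scoped ENNReal

/-!
Hölder's inequality in `j` (exponent `p` on `r`, the conjugate exponent `q` on the kernel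
`1 / |j - k|`) followed by Cauchy–Schwarz in `k` bounds both sums by
`‖r‖_p ‖g‖ (Σ_k (Σ_j |j - k|^(-q))^(2/q))^(1/2)`, the sums running over the relevant regions.
On `2ℤ` an inner sum over a half-line at distance `d` from `k` is `O((d + 2)^(1 - q))`, and
`(1 - q) (2 / q) = -(2 / p)`; since `p < 2` the remaining sum over `k` is dominated by the
convergent series `Σ_n (2n + 2)^(-2/p)`, uniformly in `N`.

The estimates are made in `ℝ≥0∞`, where every series has a sum, so the convergence of the double
series never has to be established.
-/

/-- The tangent line of the convex function `x ↦ x ^ (1 - s)` at `b` lies below its graph;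
after clearing denominators this is Bernoulli's inequality for `(b / a) ^ s`. -/
theorem Real.mul_sub_mul_rpow_neg_le_rpow_one_sub_sub {s a b : ℝ} (hs : 1 ≤ s) (ha : 0 < a)
    (hab : a ≤ b) : (s - 1) * (b - a) * b ^ (-s) ≤ a ^ (1 - s) - b ^ (1 - s) := by
  have hb := ha.trans_le hab
  have bernoulli := one_add_mul_self_le_rpow_one_add (s := b / a - 1)
    (by linarith [div_nonneg hb.le ha.le]) hs
  rw [add_sub_cancel, Real.div_rpow hb.le ha.le, le_div_iff₀ (by positivity)] at bernoulli
  rw [Real.rpow_sub ha, Real.rpow_sub hb, Real.rpow_one, Real.rpow_one, Real.rpow_neg hb.le]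
  have hA : 0 < a ^ s := by positivity
  have hB : 0 < b ^ s := by positivity
  rw [div_sub_div _ _ hA.ne' hB.ne', le_div_iff₀ (by positivity)]
  field_simp at bernoulli ⊢
  nlinarith

lemma ite_le_ite_of_imp {α : Type*} [AddMonoid α] [PartialOrder α] [CanonicallyOrderedAdd α]
    {P Q : Prop} [Decidable P] [Decidable Q] (h : P → Q) (x : α) :
    (if P then x else 0) ≤ if Q then x else 0 := by
  by_cases hP : P
  · rw [if_pos hP, if_pos (h hP)]
  · rw [if_neg hP]
    exact zero_le

lemma tsum_le_toReal_tsum_ofReal {α : Type*} {f : α → ℝ} (hf : ∀ a, 0 ≤ f a) :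
    ∑' a, f a ≤ (∑' a, ENNReal.ofReal (f a)).toReal := by
  by_cases hs : Summable f
  · rw [← ENNReal.ofReal_tsum_of_nonneg hf hs, ENNReal.toReal_ofReal (tsum_nonneg hf)]
  · rw [tsum_eq_zero_of_not_summable hs]
    exact ENNReal.toReal_nonneg

theorem ENNReal.tsum_mul_le_Lp_mul_Lq {ι : Type*} {p q : ℝ} (hpq : p.HolderConjugate q)
    (f g : ι → ℝ≥0∞) :
    ∑' i, f i * g i ≤ (∑' i, f i ^ p) ^ (1 / p) * (∑' i, g i ^ q) ^ (1 / q) := by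
  let _ : MeasurableSpace ι := ⊤
  simpa only [MeasureTheory.lintegral_count, Pi.mul_apply] using ENNReal.lintegral_mul_le_Lp_mul_Lq
    (MeasureTheory.Measure.count : MeasureTheory.Measure ι) hpq
    (measurable_from_top (f := f)).aemeasurable (measurable_from_top (f := g)).aemeasurable

theorem tsum_tsum_mul_le_of_holderConjugate {ι : Type*} [AddGroup ι] {p q : ℝ}
    (hpq : p.HolderConjugate q) (R G : ι → ℝ≥0∞) (w : ι → ι → ℝ≥0∞) :
    ∑' k, ∑' j, R (j + k) * G k * w k j
      ≤ (∑' m, R m ^ p) ^ (1 / p) * (∑' k, G k ^ (2 : ℝ)) ^ (1 / (2 : ℝ))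
        * (∑' k, (∑' j, w k j ^ q) ^ (2 / q)) ^ (1 / (2 : ℝ)) := by
  set A : ι → ℝ≥0∞ := fun k => (∑' j, w k j ^ q) ^ (1 / q)
  have inner (k : ι) : ∑' j, R (j + k) * w k j ≤ (∑' m, R m ^ p) ^ (1 / p) * A k := by
    rw [← (Equiv.addRight k).tsum_eq (fun m => R m ^ p)]
    exact ENNReal.tsum_mul_le_Lp_mul_Lq hpq _ _
  have hA (k : ι) : A k ^ (2 : ℝ) = (∑' j, w k j ^ q) ^ (2 / q) := by
    rw [← ENNReal.rpow_mul, one_div_mul_eq_div]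
  calc ∑' k, ∑' j, R (j + k) * G k * w k j
      = ∑' k, G k * ∑' j, R (j + k) * w k j := by
        refine tsum_congr fun k => ?_
        rw [← ENNReal.tsum_mul_left]
        exact tsum_congr fun j => by ring
    _ ≤ ∑' k, G k * ((∑' m, R m ^ p) ^ (1 / p) * A k) :=
        ENNReal.tsum_le_tsum fun k => mul_le_mul_right (inner k) _
    _ = (∑' m, R m ^ p) ^ (1 / p) * ∑' k, G k * A k := by
        rw [← ENNReal.tsum_mul_left]
        exact tsum_congr fun k => by ring
    _ ≤ _ := by
        rw [mul_assoc]
        refine mul_le_mul_right ?_ _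
        simpa only [hA] using
          ENNReal.tsum_mul_le_Lp_mul_Lq Real.HolderConjugate.two_two G A

noncomputable def evenTailConst (s : ℝ) : ℝ := 1 + 1 / (2 * (s - 1))

lemma evenTailConst_pos {s : ℝ} (hs : 1 < s) : 0 < evenTailConst s := by
  unfold evenTailConst
  have : 0 < s - 1 := by linarith
  positivity

lemma sum_range_rpow_neg_add_le {s m : ℝ} (hs : 1 < s) (hm : 0 ≤ m) (M : ℕ) :
    ∑ n ∈ Finset.range (M + 1), (m + 2 * n + 2) ^ (-s) + (m + 2 * M + 2) ^ (1 - s) / (2 * (s - 1))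
      ≤ evenTailConst s * (m + 2) ^ (1 - s) := by
  have hs' : 0 < 2 * (s - 1) := by linarith
  induction M with
  | zero =>
    have : (m + 2) ^ (-s) ≤ (m + 2) ^ (1 - s) :=
      Real.rpow_le_rpow_of_exponent_le (by linarith) (by linarith)
    simp only [zero_add, Finset.sum_range_one, Nat.cast_zero, mul_zero, add_zero, evenTailConst]
    rw [add_mul, one_mul, one_div_mul_eq_div]
    linarith
  | succ M ih =>
    have step := Real.mul_sub_mul_rpow_neg_le_rpow_one_sub_sub hs.le
      (a := m + 2 * M + 2) (b := m + 2 * M + 4) (by positivity) (by linarith)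
    rw [Finset.sum_range_succ]
    push_cast
    rw [show m + 2 * (M + 1) + 2 = m + 2 * M + 4 by ring]
    have h : (m + 2 * M + 4) ^ (-s)
        ≤ ((m + 2 * M + 2) ^ (1 - s) - (m + 2 * M + 4) ^ (1 - s)) / (2 * (s - 1)) := by
      rw [le_div_iff₀ hs']
      linarith
    rw [sub_div] at h
    linarith

lemma tsum_ofReal_rpow_neg_le {s m : ℝ} (hs : 1 < s) (hm : 0 ≤ m) :
    ∑' n : ℕ, ENNReal.ofReal ((m + 2 * n + 2) ^ (-s))
      ≤ ENNReal.ofReal (evenTailConst s * (m + 2) ^ (1 - s)) := by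
  refine ENNReal.tsum_le_of_sum_range_le fun M => ?_
  rw [← ENNReal.ofReal_sum_of_nonneg fun n _ => by positivity]
  refine ENNReal.ofReal_le_ofReal ?_
  have hs' : 0 < 2 * (s - 1) := by linarith
  calc ∑ n ∈ Finset.range M, (m + 2 * n + 2) ^ (-s)
      ≤ ∑ n ∈ Finset.range (M + 1), (m + 2 * n + 2) ^ (-s) :=
        Finset.sum_le_sum_of_subset_of_nonneg (by simp) fun _ _ _ => by positivity
    _ ≤ _ := by
        have := sum_range_rpow_neg_add_le hs hm M
        have : 0 ≤ (m + 2 * M + 2) ^ (1 - s) / (2 * (s - 1)) := by positivity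
        linarith

lemma tsum_ite_even_gt {α : Type*} [AddCommMonoid α] [TopologicalSpace α] {a : ℤ} (ha : Even a)
    (F : ℤ → α) :
    ∑' j : ℤ, (if Even j ∧ a < j then F j else 0) = ∑' n : ℕ, F (a + 2 * n + 2) := by
  have hinj : Function.Injective fun n : ℕ => a + 2 * (n : ℤ) + 2 := fun m n h => by
    simp only at h; omega
  rw [← hinj.tsum_eq]
  · refine tsum_congr fun n => if_pos ⟨?_, by omega⟩
    exact (ha.add (even_two_mul _)).add even_two
  · intro j hj
    obtain ⟨hje, haj⟩ : Even j ∧ a < j := by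
      by_contra h
      exact hj (if_neg h)
    obtain ⟨t, ht⟩ := hje.sub ha
    exact ⟨(t - 1).toNat, by simp only; omega⟩

lemma tsum_ite_even_lt {α : Type*} [AddCommMonoid α] [TopologicalSpace α] {b : ℤ} (hb : Even b)
    (F : ℤ → α) :
    ∑' j : ℤ, (if Even j ∧ j < b then F j else 0) = ∑' n : ℕ, F (b - 2 * n - 2) := by
  rw [← (Equiv.neg ℤ).tsum_eq]
  convert tsum_ite_even_gt hb.neg (fun j => F (-j)) using 1
  · simp only [Equiv.neg_apply, even_neg, neg_lt]
  · exact tsum_congr fun n => congrArg F (by ring)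

lemma tsum_ite_even_gt_rpow_le {s : ℝ} (hs : 1 < s) {a : ℤ} (ha : Even a) {c : ℝ} (hc : c ≤ a) :
    ∑' j : ℤ, (if Even j ∧ a < j then ENNReal.ofReal (|(j : ℝ) - c| ^ (-s)) else 0)
      ≤ ENNReal.ofReal (evenTailConst s * (a - c + 2) ^ (1 - s)) := by
  rw [tsum_ite_even_gt ha]
  convert tsum_ofReal_rpow_neg_le hs (sub_nonneg.2 hc) using 4 with n
  push_cast
  rw [abs_of_nonneg (by linarith [(Nat.cast_nonneg n : (0 : ℝ) ≤ n)])]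
  ring_nf

lemma tsum_ite_even_lt_rpow_le {s : ℝ} (hs : 1 < s) {b : ℤ} (hb : Even b) {c : ℝ} (hc : b ≤ c) :
    ∑' j : ℤ, (if Even j ∧ j < b then ENNReal.ofReal (|(j : ℝ) - c| ^ (-s)) else 0)
      ≤ ENNReal.ofReal (evenTailConst s * (c - b + 2) ^ (1 - s)) := by
  rw [tsum_ite_even_lt hb]
  convert tsum_ofReal_rpow_neg_le hs (sub_nonneg.2 hc) using 4 with n
  push_cast
  rw [abs_of_nonpos (by linarith [(Nat.cast_nonneg n : (0 : ℝ) ≤ n)])]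
  ring_nf

lemma tsum_ite_even_gt_rpow_self_le {s : ℝ} (hs : 1 < s) {a : ℤ} (ha : Even a) :
    ∑' j : ℤ, (if Even j ∧ a < j then ENNReal.ofReal (|(j : ℝ) - a| ^ (-s)) else 0)
      ≤ ENNReal.ofReal (evenTailConst s * 2 ^ (1 - s)) := by
  simpa using tsum_ite_even_gt_rpow_le hs ha le_rfl

lemma tsum_ite_even_lt_rpow_self_le {s : ℝ} (hs : 1 < s) {b : ℤ} (hb : Even b) :
    ∑' j : ℤ, (if Even j ∧ j < b then ENNReal.ofReal (|(j : ℝ) - b| ^ (-s)) else 0)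
      ≤ ENNReal.ofReal (evenTailConst s * 2 ^ (1 - s)) := by
  simpa using tsum_ite_even_lt_rpow_le hs hb le_rfl

lemma ofReal_mul_rpow_one_sub_rpow {p q c d : ℝ} (hpq : p.HolderConjugate q) (hc : 0 ≤ c)
    (hd : 0 ≤ d) :
    ENNReal.ofReal (c * d ^ (1 - q)) ^ (2 / q)
      = ENNReal.ofReal (c ^ (2 / q)) * ENNReal.ofReal (d ^ (-(2 / p))) := by
  have hexp : (1 - q) * (2 / q) = -(2 / p) := by
    have h := hpq.inv_add_inv_eq_one
    field_simp [hpq.ne_zero, hpq.symm.ne_zero] at h ⊢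
    linarith
  rw [ENNReal.ofReal_rpow_of_nonneg (by positivity) (div_nonneg zero_le_two hpq.symm.nonneg),
    Real.mul_rpow hc (by positivity), ← Real.rpow_mul hd, hexp,
    ENNReal.ofReal_mul (by positivity)]

lemma rpow_tsum_even_abs_gt_le {p q : ℝ} (hpq : p.HolderConjugate q) (hp2 : p < 2) {N k : ℤ}
    (hN : Even N) (hk : |k| ≤ N) :
    (∑' j : ℤ, if Even j ∧ N < |j| then ENNReal.ofReal (|(j : ℝ) - k| ^ (-q)) else 0) ^ (2 / q)
      ≤ ENNReal.ofReal (evenTailConst q ^ (2 / q))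
        * (ENNReal.ofReal (|(k : ℝ) - (N + 2 : ℤ)| ^ (-(2 / p)))
          + ENNReal.ofReal (|(k : ℝ) - (-N - 2 : ℤ)| ^ (-(2 / p)))) := by
  have hq := hpq.symm.lt
  have hK := (evenTailConst_pos hq).le
  have hq0 : 0 ≤ 2 / q := div_nonneg zero_le_two hpq.symm.nonneg
  have hq1 : 2 / q ≤ 1 := by
    rw [div_le_one hpq.symm.pos]
    nlinarith [hpq.sub_one_mul_conj, hpq.sub_one_pos]
  obtain ⟨hkN, hNk⟩ := abs_le.1 hk
  have hkN' : (-N : ℝ) ≤ k := by exact_mod_cast hkN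
  have hNk' : (k : ℝ) ≤ N := by exact_mod_cast hNk
  have split : (∑' j : ℤ, if Even j ∧ N < |j| then ENNReal.ofReal (|(j : ℝ) - k| ^ (-q)) else 0)
      ≤ (∑' j : ℤ, if Even j ∧ N < j then ENNReal.ofReal (|(j : ℝ) - k| ^ (-q)) else 0)
        + ∑' j : ℤ, if Even j ∧ j < -N then ENNReal.ofReal (|(j : ℝ) - k| ^ (-q)) else 0 := by
    rw [← ENNReal.tsum_add]
    refine ENNReal.tsum_le_tsum fun j => ?_
    by_cases hj : Even j ∧ N < |j|
    · rw [if_pos hj]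
      rcases lt_abs.1 hj.2 with h | h
      · rw [if_pos ⟨hj.1, h⟩]
        exact le_self_add
      · rw [if_pos (⟨hj.1, by omega⟩ : Even j ∧ j < -N)]
        exact le_add_self
    · rw [if_neg hj]
      exact zero_le
  have above := tsum_ite_even_gt_rpow_le hq hN hNk'
  have below := tsum_ite_even_lt_rpow_le hq hN.neg (c := k) (by push_cast; exact hkN')
  calc _ ≤ (ENNReal.ofReal (evenTailConst q * (N - k + 2) ^ (1 - q))
          + ENNReal.ofReal (evenTailConst q * (k - ((-N : ℤ) : ℝ) + 2) ^ (1 - q))) ^ (2 / q) :=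
        ENNReal.rpow_le_rpow (split.trans (add_le_add above below)) hq0
    _ ≤ ENNReal.ofReal (evenTailConst q * (N - k + 2) ^ (1 - q)) ^ (2 / q)
          + ENNReal.ofReal (evenTailConst q * (k - ((-N : ℤ) : ℝ) + 2) ^ (1 - q)) ^ (2 / q) :=
        ENNReal.rpow_add_le_add_rpow _ _ hq0 hq1
    _ = _ := by
        push_cast
        rw [ofReal_mul_rpow_one_sub_rpow hpq hK (by linarith),
          ofReal_mul_rpow_one_sub_rpow hpq hK (by linarith), mul_add,
          abs_of_nonpos (by linarith), abs_of_nonneg (by linarith)]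
        ring_nf

lemma rpow_tsum_even_abs_le_le {p q : ℝ} (hpq : p.HolderConjugate q) {N k : ℤ} (hN0 : 0 ≤ N)
    (hN : Even N) (hk : Even k) (hNk : N < |k|) :
    (∑' j : ℤ, if Even j ∧ |j| ≤ N then ENNReal.ofReal (|(j : ℝ) - k| ^ (-q)) else 0) ^ (2 / q)
      ≤ ENNReal.ofReal (evenTailConst q ^ (2 / q))
        * ENNReal.ofReal ((|(k : ℝ)| - N) ^ (-(2 / p))) := by
  have hq := hpq.symm.lt
  have hNk' : (N : ℝ) < |(k : ℝ)| := by exact_mod_cast hNk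
  have hN0' : (0 : ℝ) ≤ N := by exact_mod_cast hN0
  suffices h : (∑' j : ℤ, if Even j ∧ |j| ≤ N then ENNReal.ofReal (|(j : ℝ) - k| ^ (-q)) else 0)
      ≤ ENNReal.ofReal (evenTailConst q * (|(k : ℝ)| - N) ^ (1 - q)) by
    rw [← ofReal_mul_rpow_one_sub_rpow hpq (evenTailConst_pos hq).le (by linarith)]
    exact ENNReal.rpow_le_rpow h (div_nonneg zero_le_two hpq.symm.nonneg)
  obtain ⟨t, ht⟩ := hk.sub hN
  rcases lt_abs.1 hNk with hNk | hNk
  · have hb : (N + 2 : ℤ) ≤ (k : ℝ) := by exact_mod_cast (by omega : N + 2 ≤ k)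
    calc _ ≤ ∑' j : ℤ, (if Even j ∧ j < N + 2
            then ENNReal.ofReal (|(j : ℝ) - k| ^ (-q)) else 0) :=
          ENNReal.tsum_le_tsum fun j => ite_le_ite_of_imp (fun h => ⟨h.1, by linarith [le_abs_self j]⟩) _
      _ ≤ _ := tsum_ite_even_lt_rpow_le hq (hN.add even_two) hb
      _ = _ := by
          rw [abs_of_pos (by push_cast at hb; linarith)]
          push_cast
          ring_nf
  · have ha : (k : ℝ) ≤ (-N - 2 : ℤ) := by exact_mod_cast (by omega : k ≤ -N - 2)
    calc _ ≤ ∑' j : ℤ, (if Even j ∧ -N - 2 < j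
            then ENNReal.ofReal (|(j : ℝ) - k| ^ (-q)) else 0) :=
          ENNReal.tsum_le_tsum fun j => ite_le_ite_of_imp (fun h => ⟨h.1, by linarith [neg_abs_le j]⟩) _
      _ ≤ _ := tsum_ite_even_gt_rpow_le hq (hN.neg.sub even_two) ha
      _ = _ := by
          rw [abs_of_neg (by push_cast at ha; linarith)]
          push_cast
          ring_nf

/-- For disjoint `P` and `Q` this never meets `j = k`, where `ℝ≥0∞` inversion gives `⊤` but the
real division in `sigma1`, `sigma2` gives `0`. -/
noncomputable def evenKernel (P Q : ℤ → Prop) [DecidablePred P] [DecidablePred Q] (k j : ℤ) :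
    ℝ≥0∞ :=
  if Even k ∧ Even j ∧ P k ∧ Q j then (ENNReal.ofReal |(j : ℝ) - k|)⁻¹ else 0

lemma rpow_tsum_evenKernel_rpow {P Q : ℤ → Prop} [DecidablePred P] [DecidablePred Q]
    (hPQ : ∀ k j, P k → Q j → k ≠ j) {q : ℝ} (hq : 0 < q) (k : ℤ) :
    (∑' j, evenKernel P Q k j ^ q) ^ (2 / q)
      = if Even k ∧ P k then
          (∑' j : ℤ, if Even j ∧ Q j then ENNReal.ofReal (|(j : ℝ) - k| ^ (-q)) else 0) ^ (2 / q)
        else 0 := by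
  by_cases hk : Even k ∧ P k
  · rw [if_pos hk]
    congr 1
    refine tsum_congr fun j => ?_
    by_cases hj : Even j ∧ Q j
    · have hjk : (0 : ℝ) < |(j : ℝ) - k| :=
        abs_pos.2 (sub_ne_zero.2 (by exact_mod_cast (hPQ k j hk.2 hj.2).symm))
      rw [evenKernel, if_pos ⟨hk.1, hj.1, hk.2, hj.2⟩, if_pos hj,
        ← ENNReal.ofReal_rpow_of_pos hjk, ENNReal.rpow_neg, ENNReal.inv_rpow]
    · rw [evenKernel, if_neg (by tauto), if_neg hj, ENNReal.zero_rpow_of_pos hq]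
  · have h0 (j : ℤ) : evenKernel P Q k j = 0 := if_neg (by tauto)
    simp only [h0, ENNReal.zero_rpow_of_pos hq, tsum_zero, if_neg hk,
      ENNReal.zero_rpow_of_pos (div_pos two_pos hq)]

/-- For disjoint `P` and `Q` this never meets `j = k`, where `ℝ≥0∞` inversion gives `⊤` but the
real division in `sigma1`, `sigma2` gives `0`. -/
noncomputable def evenKernelBound (p q : ℝ) : ℝ :=
  evenTailConst q ^ (2 / q) * (2 * (evenTailConst (2 / p) * 2 ^ (1 - 2 / p)))

lemma evenKernelBound_pos {p q : ℝ} (hpq : p.HolderConjugate q) (hp2 : p < 2) :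
    0 < evenKernelBound p q := by
  have := evenTailConst_pos hpq.symm.lt
  have := evenTailConst_pos ((one_lt_div hpq.pos).2 hp2)
  unfold evenKernelBound
  positivity

lemma tsum_mul_add_le_evenKernelBound {p q : ℝ} (hpq : p.HolderConjugate q) (hp2 : p < 2)
    {f g : ℤ → ℝ≥0∞} (hf : ∑' k, f k ≤ ENNReal.ofReal (evenTailConst (2 / p) * 2 ^ (1 - 2 / p)))
    (hg : ∑' k, g k ≤ ENNReal.ofReal (evenTailConst (2 / p) * 2 ^ (1 - 2 / p))) :
    ∑' k, ENNReal.ofReal (evenTailConst q ^ (2 / q)) * (f k + g k)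
      ≤ ENNReal.ofReal (evenKernelBound p q) := by
  have := (evenTailConst_pos ((one_lt_div hpq.pos).2 hp2)).le
  have := (evenTailConst_pos hpq.symm.lt).le
  rw [ENNReal.tsum_mul_left, ENNReal.tsum_add, evenKernelBound, two_mul,
    ENNReal.ofReal_mul (by positivity), ENNReal.ofReal_add (by positivity) (by positivity)]
  gcongr

lemma tsum_rpow_tsum_evenKernel_abs_le_abs_gt {p q : ℝ} (hpq : p.HolderConjugate q) (hp2 : p < 2)
    {N : ℤ} (hN : Even N) :
    ∑' k, (∑' j, evenKernel (fun k => |k| ≤ N) (fun j => N < |j|) k j ^ q) ^ (2 / q)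
      ≤ ENNReal.ofReal (evenKernelBound p q) := by
  have hs : 1 < 2 / p := (one_lt_div hpq.pos).2 hp2
  set L := ENNReal.ofReal (evenTailConst q ^ (2 / q))
  have hPQ (k j : ℤ) (hk : |k| ≤ N) (hj : N < |j|) : k ≠ j := by rintro rfl; omega
  calc _ = ∑' k : ℤ, if Even k ∧ |k| ≤ N then
          (∑' j : ℤ, if Even j ∧ N < |j| then ENNReal.ofReal (|(j : ℝ) - k| ^ (-q)) else 0)
            ^ (2 / q) else 0 :=
        tsum_congr (rpow_tsum_evenKernel_rpow hPQ hpq.symm.pos)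
    _ ≤ ∑' k : ℤ, L * ((if Even k ∧ k < N + 2 then
            ENNReal.ofReal (|(k : ℝ) - (N + 2 : ℤ)| ^ (-(2 / p))) else 0)
          + if Even k ∧ -N - 2 < k then
            ENNReal.ofReal (|(k : ℝ) - (-N - 2 : ℤ)| ^ (-(2 / p))) else 0) := by
        refine ENNReal.tsum_le_tsum fun k => ?_
        by_cases hk : Even k ∧ |k| ≤ N
        · obtain ⟨hkN, hNk⟩ := abs_le.1 hk.2
          rw [if_pos hk, if_pos ⟨hk.1, by omega⟩, if_pos ⟨hk.1, by omega⟩]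
          exact rpow_tsum_even_abs_gt_le hpq hp2 hN hk.2
        · rw [if_neg hk]
          exact zero_le
    _ ≤ _ := tsum_mul_add_le_evenKernelBound hpq hp2
        (tsum_ite_even_lt_rpow_self_le hs (hN.add even_two))
        (tsum_ite_even_gt_rpow_self_le hs (hN.neg.sub even_two))

lemma tsum_rpow_tsum_evenKernel_abs_gt_abs_le {p q : ℝ} (hpq : p.HolderConjugate q)
    (hp2 : p < 2) {N : ℤ} (hN0 : 0 ≤ N) (hN : Even N) :
    ∑' k, (∑' j, evenKernel (fun k => N < |k|) (fun j => |j| ≤ N) k j ^ q) ^ (2 / q)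
      ≤ ENNReal.ofReal (evenKernelBound p q) := by
  have hs : 1 < 2 / p := (one_lt_div hpq.pos).2 hp2
  set L := ENNReal.ofReal (evenTailConst q ^ (2 / q))
  have hPQ (k j : ℤ) (hk : N < |k|) (hj : |j| ≤ N) : k ≠ j := by rintro rfl; omega
  calc _ = ∑' k : ℤ, if Even k ∧ N < |k| then
          (∑' j : ℤ, if Even j ∧ |j| ≤ N then ENNReal.ofReal (|(j : ℝ) - k| ^ (-q)) else 0)
            ^ (2 / q) else 0 :=
        tsum_congr (rpow_tsum_evenKernel_rpow hPQ hpq.symm.pos)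
    _ ≤ ∑' k : ℤ, L * ((if Even k ∧ N < k then
            ENNReal.ofReal (|(k : ℝ) - N| ^ (-(2 / p))) else 0)
          + if Even k ∧ k < -N then
            ENNReal.ofReal (|(k : ℝ) - (-N : ℤ)| ^ (-(2 / p))) else 0) := by
        refine ENNReal.tsum_le_tsum fun k => ?_
        by_cases hk : Even k ∧ N < |k|
        · rw [if_pos hk]
          refine (rpow_tsum_even_abs_le_le hpq hN0 hN hk.1 hk.2).trans (mul_le_mul_right ?_ L)
          rcases lt_abs.1 hk.2 with hNk | hNk
          · have hk0 : (0 : ℝ) ≤ k := by exact_mod_cast (by omega : 0 ≤ k)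
            have hNk' : (N : ℝ) < k := by exact_mod_cast hNk
            rw [if_pos ⟨hk.1, hNk⟩, abs_of_nonneg hk0, abs_of_pos (sub_pos.2 hNk')]
            exact le_self_add
          · have hk0 : (k : ℝ) ≤ 0 := by exact_mod_cast (by omega : k ≤ 0)
            have hkN : (k : ℝ) + N < 0 := by exact_mod_cast (by omega : k + N < 0)
            rw [if_pos (⟨hk.1, by omega⟩ : Even k ∧ k < -N), abs_of_nonpos hk0,
              abs_of_neg (a := (k : ℝ) - (-N : ℤ)) (by push_cast; linarith)]
            push_cast
            ring_nf
            exact le_add_self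
        · rw [if_neg hk]
          exact zero_le
    _ ≤ _ := tsum_mul_add_le_evenKernelBound hpq hp2
        (tsum_ite_even_gt_rpow_self_le hs hN) (tsum_ite_even_lt_rpow_self_le hs hN.neg)

noncomputable def evenOfReal (x : ℤ → ℝ) (k : ℤ) : ℝ≥0∞ :=
  if Even k then ENNReal.ofReal (x k) else 0

lemma tsum_evenOfReal_rpow_rpow {x : ℤ → ℝ} {p : ℝ} (hp : 0 < p) (hx : ∀ k, 0 ≤ x k)
    (hs : Summable fun k : ℤ => if Even k then x k ^ p else 0) :
    (∑' k, evenOfReal x k ^ p) ^ (1 / p) = ENNReal.ofReal (evenLpNorm x p) := by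
  have hnonneg (k : ℤ) : 0 ≤ if Even k then x k ^ p else 0 := by
    split_ifs
    exacts [Real.rpow_nonneg (hx k) p, le_rfl]
  have hterm (k : ℤ) : evenOfReal x k ^ p = ENNReal.ofReal (if Even k then x k ^ p else 0) := by
    unfold evenOfReal
    split_ifs
    exacts [ENNReal.ofReal_rpow_of_nonneg (hx k) hp.le, by simp [ENNReal.zero_rpow_of_pos hp]]
  rw [tsum_congr hterm, ← ENNReal.ofReal_tsum_of_nonneg hnonneg hs,
    ENNReal.ofReal_rpow_of_nonneg (tsum_nonneg hnonneg) (one_div_nonneg.2 hp.le), evenLpNorm]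

lemma evenL2Norm_eq_evenLpNorm (x : ℤ → ℝ) : evenL2Norm x = evenLpNorm x 2 := by
  simp only [evenL2Norm, evenLpNorm, Real.sqrt_eq_rpow, Real.rpow_two]

lemma ofReal_ite_div_eq_evenKernel {P Q : ℤ → Prop} [DecidablePred P] [DecidablePred Q]
    (hPQ : ∀ k j, P k → Q j → k ≠ j) {r g : ℤ → ℝ} (hr : ∀ k, 0 ≤ r k) (k j : ℤ) :
    ENNReal.ofReal (if Even k ∧ Even j ∧ P k ∧ Q j
        then r (j + k) * g k / ((|j - k| : ℤ) : ℝ) else 0)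
      = evenOfReal r (j + k) * evenOfReal g k * evenKernel P Q k j := by
  unfold evenKernel
  split_ifs with h
  · have hjk : (0 : ℝ) < |(j : ℝ) - k| :=
      abs_pos.2 (sub_ne_zero.2 (by exact_mod_cast (hPQ k j h.2.2.1 h.2.2.2).symm))
    rw [evenOfReal, evenOfReal, if_pos (h.2.1.add h.1), if_pos h.1, Int.cast_abs, Int.cast_sub,
      ENNReal.ofReal_div_of_pos hjk, ENNReal.ofReal_mul (hr _), div_eq_mul_inv]
  · simp

theorem tsum_ite_mul_div_abs_sub_le {p q : ℝ} (hpq : p.HolderConjugate q) {P Q : ℤ → Prop}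
    [DecidablePred P] [DecidablePred Q] (hPQ : ∀ k j, P k → Q j → k ≠ j) {r g : ℤ → ℝ}
    (hr0 : ∀ k, 0 ≤ r k) (hg0 : ∀ k, 0 ≤ g k)
    (hr : Summable fun k : ℤ => if Even k then r k ^ p else 0)
    (hg : Summable fun k : ℤ => if Even k then g k ^ 2 else 0) {B : ℝ} (hB0 : 0 ≤ B)
    (hB : ∑' k, (∑' j, evenKernel P Q k j ^ q) ^ (2 / q) ≤ ENNReal.ofReal B) :
    ∑' x : ℤ × ℤ, (if Even x.1 ∧ Even x.2 ∧ P x.1 ∧ Q x.2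
        then r (x.2 + x.1) * g x.1 / ((|x.2 - x.1| : ℤ) : ℝ) else 0)
      ≤ √B * evenLpNorm r p * evenL2Norm g := by
  have hnonneg (x : ℤ × ℤ) : 0 ≤ if Even x.1 ∧ Even x.2 ∧ P x.1 ∧ Q x.2
      then r (x.2 + x.1) * g x.1 / ((|x.2 - x.1| : ℤ) : ℝ) else 0 := by
    split_ifs
    exacts [div_nonneg (mul_nonneg (hr0 _) (hg0 _)) (by positivity), le_rfl]
  have hLp : 0 ≤ evenLpNorm r p := Real.rpow_nonneg (tsum_nonneg fun k => by
    split_ifs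
    exacts [Real.rpow_nonneg (hr0 k) p, le_rfl]) _
  have hL2 : 0 ≤ evenL2Norm g := Real.sqrt_nonneg _
  refine (tsum_le_toReal_tsum_ofReal hnonneg).trans
    (ENNReal.toReal_le_of_le_ofReal (by positivity) ?_)
  rw [ENNReal.tsum_prod']
  simp only [ofReal_ite_div_eq_evenKernel hPQ hr0]
  refine (tsum_tsum_mul_le_of_holderConjugate hpq _ _ _).trans ?_
  rw [tsum_evenOfReal_rpow_rpow hpq.pos hr0 hr,
    tsum_evenOfReal_rpow_rpow two_pos hg0 (by simpa only [Real.rpow_two] using hg),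
    ← evenL2Norm_eq_evenLpNorm]
  calc _ ≤ ENNReal.ofReal (evenLpNorm r p) * ENNReal.ofReal (evenL2Norm g)
        * ENNReal.ofReal B ^ (1 / (2 : ℝ)) := by gcongr
    _ = _ := by
        rw [ENNReal.ofReal_rpow_of_nonneg hB0 (by norm_num), ← Real.sqrt_eq_rpow,
          ← ENNReal.ofReal_mul hLp, ← ENNReal.ofReal_mul (by positivity)]
        ring_nf

lemma sigma2_eq (r g : ℤ → ℝ) (N : ℤ) :
    sigma2 r g N = ∑' x : ℤ × ℤ, (if Even x.1 ∧ Even x.2 ∧ N < |x.1| ∧ |x.2| ≤ N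
        then r (x.2 + x.1) * g x.1 / ((|x.2 - x.1| : ℤ) : ℝ) else 0) :=
  tsum_congr fun x => by rw [abs_sub_comm x.1 x.2]

/-- For every `p ∈ (1,2)` there is `C(p) > 0` such that for all
nonnegative sequences `r ∈ ℓᵖ(2ℤ)`, `g ∈ ℓ²(2ℤ)` and every even `N ≥ 0`,
`σ₁(N) ≤ C(p)‖r‖_p‖g‖` and `σ₂(N) ≤ C(p)‖r‖_p‖g‖`. -/
theorem stmt6 (p : ℝ) (hp1 : 1 < p) (hp2 : p < 2) :
    ∃ C > 0, ∀ r g : ℤ → ℝ, (∀ k, 0 ≤ r k) → (∀ k, 0 ≤ g k) →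
      (Summable fun k : ℤ => if Even k then r k ^ p else 0) →
      (Summable fun k : ℤ => if Even k then g k ^ 2 else 0) →
      ∀ N : ℤ, 0 ≤ N → Even N →
        sigma1 r g N ≤ C * evenLpNorm r p * evenL2Norm g ∧
        sigma2 r g N ≤ C * evenLpNorm r p * evenL2Norm g := by
  have hpq : p.HolderConjugate p.conjExponent := .conjExponent hp1
  have hB := (evenKernelBound_pos hpq hp2).le
  refine ⟨√(evenKernelBound p p.conjExponent), Real.sqrt_pos.2 (evenKernelBound_pos hpq hp2),
    fun r g hr0 hg0 hr hg N hN0 hN => ⟨?_, ?_⟩⟩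
  · exact tsum_ite_mul_div_abs_sub_le hpq (fun k j hk hj => by rintro rfl; omega)
      hr0 hg0 hr hg hB (tsum_rpow_tsum_evenKernel_abs_le_abs_gt hpq hp2 hN)
  · rw [sigma2_eq]
    exact tsum_ite_mul_div_abs_sub_le hpq (fun k j hk hj => by rintro rfl; omega)
      hr0 hg0 hr hg hB (tsum_rpow_tsum_evenKernel_abs_gt_abs_le hpq hp2 hN0 hN)
end

section
/- For every δ with 0 ≤ δ < ∞, the weight Ω(k) = (log(e+|k|))^δ on ℤ satisfies conditions (a1), (a2) and (a3): in particular, there is M > 0 such that for all k ∈ ℤ and all n ∈ ℕ, ((1/(n+1))·Σ_{m=k}^{k+n} Ω(m)²)·((1/(n+1))·Σ_{m=k}^{k+n} Ω(m)^{−2}) ≤ M. -/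
/-!
Write `L(x) = log (e + x)`, so that `Ω(m)² = L(|m|)^(2δ)`. Since `e + x² + 2x ≤ (e + x)²`,
squaring the argument at most doubles `L`; this gives (a2), and on a window `[k, k + n]` with
`b = max |k| |k + n|` it gives `Ω(m)⁻² ≤ 2^(2δ) L(b)^(-2δ)` at every point with `|m| > √b`, while
`Ω(m)² ≤ L(b)^(2δ)` on the whole window. The at most `2√b + 1` points with `|m| ≤ √b` can only lie
in a long window, `b ≤ 2n + 1`, where their contribution is absorbed by the polylogarithmic growth
bound `L(b)^(2δ) ≤ C √(1 + b)`; the same bound with exponent `δ` is (a3).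
-/

open Real Finset

lemma one_le_log_exp_one_add {x : ℝ} (hx : 0 ≤ x) : 1 ≤ log (exp 1 + x) := by
  rw [le_log_iff_exp_le (by positivity)]
  linarith

lemma log_exp_one_add_le_two_mul {x y : ℝ} (hx : 0 ≤ x) (hy : 0 ≤ y) (hyx : y ≤ x ^ 2 + 2 * x) :
    log (exp 1 + y) ≤ 2 * log (exp 1 + x) := by
  have he : 1 ≤ exp 1 := one_le_exp zero_le_one
  calc log (exp 1 + y) ≤ log ((exp 1 + x) ^ 2) := log_le_log (by positivity) (by nlinarith)
    _ = 2 * log (exp 1 + x) := by rw [log_pow, Nat.cast_ofNat]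

lemma log_exp_one_add_rpow_le_mul_sqrt {a : ℝ} (ha : 0 ≤ a) :
    ∃ C > 0, ∀ x, 0 ≤ x → log (exp 1 + x) ^ a ≤ C * √(1 + x) := by
  set c := 2 * (a + 1) with hc
  have hc0 : 0 < c := by positivity
  refine ⟨c ^ (a + 1) * √(exp 1), by positivity, fun x hx => ?_⟩
  have hL : 1 ≤ log (exp 1 + x) := one_le_log_exp_one_add hx
  have hlog : log (exp 1 + x) ≤ c * (exp 1 + x) ^ c⁻¹ := by
    simpa [div_eq_mul_inv, mul_comm] using log_le_rpow_div (x := exp 1 + x) (by positivity)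
      (inv_pos.2 hc0)
  have he : 1 ≤ exp 1 := one_le_exp zero_le_one
  calc log (exp 1 + x) ^ a ≤ log (exp 1 + x) ^ (a + 1) :=
        rpow_le_rpow_of_exponent_le hL (by linarith)
    _ ≤ (c * (exp 1 + x) ^ c⁻¹) ^ (a + 1) := rpow_le_rpow (by positivity) hlog (by positivity)
    _ = c ^ (a + 1) * √(exp 1 + x) := by
        rw [mul_rpow hc0.le (by positivity), ← rpow_mul (by positivity), sqrt_eq_rpow, hc]
        congr 2
        field_simp
    _ ≤ c ^ (a + 1) * √(exp 1 * (1 + x)) := by gcongr; nlinarith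
    _ = c ^ (a + 1) * √(exp 1) * √(1 + x) := by rw [sqrt_mul (by positivity), mul_assoc]

noncomputable def logWeight (a x : ℝ) : ℝ := log (exp 1 + x) ^ a

namespace logWeight

variable {a x y : ℝ}

lemma one_le (ha : 0 ≤ a) (hx : 0 ≤ x) : 1 ≤ logWeight a x :=
  one_le_rpow (one_le_log_exp_one_add hx) ha

lemma pos (ha : 0 ≤ a) (hx : 0 ≤ x) : 0 < logWeight a x :=
  zero_lt_one.trans_le (one_le ha hx)

lemma mono (ha : 0 ≤ a) (hx : 0 ≤ x) (hxy : x ≤ y) : logWeight a x ≤ logWeight a y :=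
  rpow_le_rpow (zero_le_one.trans (one_le_log_exp_one_add hx))
    (log_le_log (by positivity) (by linarith)) ha

lemma le_two_rpow_mul (ha : 0 ≤ a) (hx : 0 ≤ x) (hy : 0 ≤ y) (hyx : y ≤ x ^ 2 + 2 * x) :
    logWeight a y ≤ 2 ^ a * logWeight a x := by
  have hL := one_le_log_exp_one_add hx
  rw [logWeight, logWeight, ← mul_rpow zero_le_two (by linarith)]
  exact rpow_le_rpow (by linarith [one_le_log_exp_one_add hy])
    (log_exp_one_add_le_two_mul hx hy hyx) ha

lemma inv_le_two_rpow_div (ha : 0 ≤ a) {m b : ℕ} (hm : b.sqrt < m) :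
    (logWeight a m)⁻¹ ≤ 2 ^ a / logWeight a b := by
  have hbm : b ≤ m ^ 2 + 2 * m := by nlinarith [Nat.lt_succ_sqrt b]
  rw [le_div_iff₀ (pos ha b.cast_nonneg), inv_mul_le_iff₀ (pos ha m.cast_nonneg), mul_comm]
  exact le_two_rpow_mul ha m.cast_nonneg b.cast_nonneg (by exact_mod_cast hbm)

end logWeight

lemma card_filter_natAbs_add_le (k : ℤ) (n t : ℕ) :
    #{i ∈ range (n + 1) | (k + (i : ℕ)).natAbs ≤ t} ≤ 2 * t + 1 := by
  calc #{i ∈ range (n + 1) | (k + (i : ℕ)).natAbs ≤ t}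
      ≤ #(Icc (-(t : ℤ)) t) :=
        card_le_card_of_injOn (fun i : ℕ => k + i)
          (fun i hi => by
            simp only [coe_filter, Set.mem_ofPred_eq, coe_Icc, Set.mem_Icc] at hi ⊢
            omega)
          (fun i _ j _ h => by simpa using h)
    _ = 2 * t + 1 := by rw [Int.card_Icc]; omega

lemma logWeight_mul_card_near_zero_le {a C : ℝ} (hC0 : 0 ≤ C)
    (hC : ∀ x, 0 ≤ x → logWeight a x ≤ C * √(1 + x)) {k : ℤ} {n b : ℕ}
    (hb : b ≤ max k.natAbs (k + n).natAbs) :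
    logWeight a b * #{i ∈ range (n + 1) | (k + (i : ℕ)).natAbs ≤ b.sqrt} ≤ 6 * C * (n + 1) := by
  set t := b.sqrt
  set s := {i ∈ range (n + 1) | (k + (i : ℕ)).natAbs ≤ t}
  obtain hs | ⟨i, hi⟩ := s.eq_empty_or_nonempty
  · rw [hs, card_empty, Nat.cast_zero, mul_zero]
    positivity
  have hbn : b ≤ 2 * n + 1 := by
    rw [mem_filter, mem_range] at hi
    have hbt : b ≤ t + n := by omega
    nlinarith [Nat.sqrt_le b]
  have hbn' : (1 + b : ℝ) ≤ 2 * (n + 1) := by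
    have : (b : ℝ) ≤ 2 * n + 1 := by exact_mod_cast hbn
    linarith
  have ht : (t : ℝ) ≤ √(1 + b) := by
    rw [le_sqrt (by positivity) (by positivity)]
    have : ((t * t : ℕ) : ℝ) ≤ b := by exact_mod_cast Nat.sqrt_le b
    push_cast at this
    nlinarith
  have h1 : 1 ≤ √(1 + (b : ℝ)) := by
    rw [le_sqrt zero_le_one (by positivity)]
    simp
  have hs : (#s : ℝ) ≤ 2 * t + 1 := by exact_mod_cast card_filter_natAbs_add_le k n t
  calc logWeight a b * #s ≤ C * √(1 + b) * (3 * √(1 + b)) :=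
        mul_le_mul (hC _ b.cast_nonneg) (by linarith) (by positivity) (by positivity)
    _ = 3 * C * (1 + b) := by
        rw [mul_mul_mul_comm, mul_self_sqrt (by positivity)]
        ring
    _ ≤ 6 * C * (n + 1) := by nlinarith

/-- Condition (a1) on `Ω` is `MuckenhouptA2 (Ω · ^ 2)`. -/
def MuckenhouptA2 (w : ℤ → ℝ) : Prop :=
  ∃ M > 0, ∀ (k : ℤ) (n : ℕ),
    ((1 / (n + 1 : ℝ)) * ∑ i ∈ range (n + 1), w (k + i)) *
      ((1 / (n + 1 : ℝ)) * ∑ i ∈ range (n + 1), (w (k + i))⁻¹) ≤ M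

theorem muckenhouptA2_logWeight {a : ℝ} (ha : 0 ≤ a) :
    MuckenhouptA2 fun m => logWeight a |(m : ℝ)| := by
  obtain ⟨C, hC0, hC⟩ := log_exp_one_add_rpow_le_mul_sqrt ha
  refine ⟨2 ^ a + 6 * C, by positivity, fun k n => ?_⟩
  set b := max k.natAbs (k + n).natAbs
  set W := logWeight a b
  have hW : 0 < W := logWeight.pos ha b.cast_nonneg
  have hN : (0 : ℝ) < n + 1 := by positivity
  have habs (i : ℕ) : |((k + i : ℤ) : ℝ)| = (k + i).natAbs := by
    rw [Nat.cast_natAbs, Int.cast_abs]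
  simp only [habs]
  have havg : 1 / (n + 1 : ℝ) * ∑ i ∈ range (n + 1), logWeight a (k + i).natAbs ≤ W := by
    rw [one_div, inv_mul_le_iff₀ hN]
    refine (sum_le_card_nsmul _ _ W fun i hi => logWeight.mono ha (by positivity) ?_).trans
      (by simp)
    have := mem_range.1 hi
    exact_mod_cast (by omega : (k + i).natAbs ≤ b)
  set s := {i ∈ range (n + 1) | (k + (i : ℕ)).natAbs ≤ b.sqrt}
  have hsum_inv : ∑ i ∈ range (n + 1), (logWeight a (k + i).natAbs)⁻¹
      ≤ (n + 1) * (2 ^ a / W) + #s := by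
    calc ∑ i ∈ range (n + 1), (logWeight a (k + i).natAbs)⁻¹
        ≤ ∑ i ∈ range (n + 1), (2 ^ a / W + if (k + (i : ℕ)).natAbs ≤ b.sqrt then 1 else 0) := by
          refine sum_le_sum fun i _ => ?_
          split_ifs with h
          · have h1 := inv_le_one_of_one_le₀ (logWeight.one_le ha (k + i).natAbs.cast_nonneg)
            have h2 : 0 ≤ 2 ^ a / W := by positivity
            linarith
          · simpa using logWeight.inv_le_two_rpow_div ha (not_le.1 h)
      _ = (n + 1) * (2 ^ a / W) + #s := by
          rw [sum_add_distrib, sum_const, card_range, nsmul_eq_mul, sum_boole]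
          push_cast
          ring
  have hnear : W * #s ≤ 6 * C * (n + 1) := logWeight_mul_card_near_zero_le hC0.le hC le_rfl
  have havg_inv : 1 / (n + 1 : ℝ) * ∑ i ∈ range (n + 1), (logWeight a (k + i).natAbs)⁻¹
      ≤ 1 / (n + 1) * ((n + 1) * (2 ^ a / W) + #s) := by gcongr
  calc (1 / (n + 1 : ℝ) * ∑ i ∈ range (n + 1), logWeight a (k + i).natAbs) *
        (1 / (n + 1 : ℝ) * ∑ i ∈ range (n + 1), (logWeight a (k + i).natAbs)⁻¹)
      ≤ W * (1 / (n + 1) * ((n + 1) * (2 ^ a / W) + #s)) :=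
        mul_le_mul havg havg_inv (mul_nonneg (by positivity) (sum_nonneg fun i _ =>
          inv_nonneg.2 (logWeight.pos ha (k + i).natAbs.cast_nonneg).le)) hW.le
    _ = 2 ^ a + W * #s / (n + 1) := by field_simp
    _ ≤ 2 ^ a + 6 * C := by
        gcongr
        rwa [div_le_iff₀ hN]

/-- For `0 ≤ δ < ∞`, the weight `Ω(k) = (log(e+|k|))^δ` satisfies
conditions (a1), (a2) and (a3). -/
theorem stmt16 (δ : ℝ) (hδ0 : 0 ≤ δ)
    (Ω : ℤ → ℝ) (hΩ : ∀ k : ℤ, Ω k = Real.log (Real.exp 1 + |(k : ℝ)|) ^ δ) :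
    (∃ M > 0, ∀ (k : ℤ) (n : ℕ),
      ((1 / (n + 1 : ℝ)) * ∑ i ∈ Finset.range (n + 1), Ω (k + i) ^ 2) *
        ((1 / (n + 1 : ℝ)) * ∑ i ∈ Finset.range (n + 1), (Ω (k + i) ^ 2)⁻¹) ≤ M) ∧
    (∃ C > 0, ∀ k : ℤ, Ω (2 * k) ≤ C * Ω k) ∧
    (∃ C > 0, ∀ k : ℤ, Ω k ≤ C * Real.sqrt (1 + |(k : ℝ)|)) := by
  have hΩ_sq (m : ℤ) : Ω m ^ 2 = logWeight (2 * δ) |(m : ℝ)| := by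
    rw [hΩ, logWeight, mul_comm, rpow_mul
      (zero_le_one.trans (one_le_log_exp_one_add (abs_nonneg _))), rpow_two]
  refine ⟨?_, ⟨2 ^ δ, by positivity, fun k => ?_⟩, ?_⟩
  · simpa only [MuckenhouptA2, hΩ_sq] using muckenhouptA2_logWeight (by positivity : 0 ≤ 2 * δ)
  · rw [hΩ, hΩ]
    refine logWeight.le_two_rpow_mul hδ0 (abs_nonneg _) (abs_nonneg _) ?_
    push_cast
    rw [abs_mul, abs_two]
    nlinarith [abs_nonneg (k : ℝ)]
  · obtain ⟨C, hC0, hC⟩ := log_exp_one_add_rpow_le_mul_sqrt hδ0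
    exact ⟨C, hC0, fun k => (hΩ k).trans_le (hC _ (abs_nonneg _))⟩
end

section
/- Let S₁₁, S₁₂, S₂₁, S₂₂ ∈ L²([0,π]), let s₁(t) = ∫₀^ت S₁₁(τ) dτ and s₂(t) = ∫₀^t S₂₂(τ) dτ, and let u₁, u₂ : [0,π] → ℂ be absolutely continuous. Set ũ₁(t) = e^{−is₁(t)} u₁(t) and ũ₂(t) = e^{is₂(t)} u₂(t). Then ũ₁, ũ₂ are absolutely continuous and: (i) for almost every t ∈ [0,π], i·ũ₁′(t) + S₁₂(t) e^{−i(s₁(t)+s₂(t))}·ũ₂(t) = e^{−is₁(t)}·(i·u₁′(t) + S₁₁(t) u₁(t) + S₁₂(t) u₂(t)) and −i·ũ₂′(t) + S₂₁(t) e^{i(s₁(t)+s₂(t))}·ũ₁(t) = e^{is₂(t)}·(−i·u₂′(t) + S₂₁(t) u₁(t) + S₂₂(t) u₂(t)); (ii) for any a, b, c, d ∈ ℂ, the pair (u₁, u₂) satisfies u₁(0) + b·u₁(π) + a·u₂(0) = 0 and d·u₁(π) + c·u₂(0) + u₂(π) = 0 if and only if (ũ₁, ũ₂) satisfies ũ₁(0)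 + b̃·ũ₁(π) + ã·ũ₂(0) = 0 and d̃·ũ₁(π) + c̃·ũ₂(0) + ũ₂(π) = 0, where ã = a, b̃ = b·e^{is₁(π)}, c̃ = c·e^{is₂(π)}, d̃ = d·e^{i(s₁(π)+s₂(π))}. Consequently, the Dirac operator L(S)u = i·diag(1,−1)·u′ + S·u with boundary conditions determined by (a,b,c,d) is similar, via the gauge transform A = diag(e^{−is₁}, e^{is₂}), to the Dirac operator L(v)ũ = i·diag(1,−1)·ũ′ + v·ũ with off-diagonal potential v₁₂ = S₁₂ e^{−i(s₁+s₂)}, v₂₁ = S₂₁ e^{i(s₁+s₂)} and boundary conditions determined by (ã,b̃,c̃,d̃). -/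
open MeasureTheory Complex

/-- `s(t) = ∫₀^t S(τ) dτ`. -/
noncomputable def gaugeInt (S : ℝ → ℂ) (t : ℝ) : ℂ := ∫ τ in (0 : ℝ)..t, S τ

/-!
Absolutely continuous functions on `[a, b]` are exactly the Lebesgue primitives
`F x = F a + ∫_a^x f`, and these are closed under products and under `F ↦ exp ∘ F`: the new
function is again absolutely continuous (`exp` is Lipschitz on the bounded range of `F`), its
a.e. derivative is given by the product and chain rules, and an absolutely continuous function
with a.e. vanishing derivative is constant. Hence `ũⱼ = e^{∓isⱼ} uⱼ` is the primitive of its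
product-rule derivative, and (i) and (ii) reduce to pointwise identities for `exp`.
-/

open Set Filter Topology intervalIntegral

section AbsolutelyContinuous

variable {X Y E : Type*} [PseudoMetricSpace X] [PseudoMetricSpace Y]
  [NormedAddCommGroup E] [NormedSpace ℝ E] {a b : ℝ}

theorem AbsolutelyContinuousOnInterval.of_dist_le_mul {f : ℝ → X} {g : ℝ → Y} {K : ℝ}
    (hg : AbsolutelyContinuousOnInterval g a b)
    (hfg : ∀ x ∈ uIcc a b, ∀ y ∈ uIcc a b, dist (f x) (f y) ≤ K * dist (g x) (g y)) :
    AbsolutelyContinuousOnInterval f a b := by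
  unfold AbsolutelyContinuousOnInterval at hg ⊢
  refine squeeze_zero' (.of_forall fun _ ↦ Finset.sum_nonneg fun _ _ ↦ dist_nonneg) ?_
    (by simpa using hg.const_mul K)
  rw [eventually_inf_principal]
  filter_upwards with ⟨n, I⟩ hnI
  rw [Finset.mul_sum]
  exact Finset.sum_le_sum fun i hi ↦ hfg _ (hnI.1 i hi).1 _ (hnI.1 i hi).2

theorem LipschitzOnWith.comp_absolutelyContinuousOnInterval {h : Y → X} {g : ℝ → Y}
    {t : Set Y} {K : NNReal} (hh : LipschitzOnWith K h t)
    (hg : AbsolutelyContinuousOnInterval g a b) (hgt : MapsTo g (uIcc a b) t) :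
    AbsolutelyContinuousOnInterval (h ∘ g) a b :=
  hg.of_dist_le_mul fun _ hx _ hy ↦ hh.dist_le_mul _ (hgt hx) _ (hgt hy)

theorem IntervalIntegrable.absolutelyContinuousOnInterval_primitive {f : ℝ → E} {c : ℝ}
    (hf : IntervalIntegrable f volume a b) (hc : c ∈ uIcc a b) :
    AbsolutelyContinuousOnInterval (fun x ↦ ∫ t in c..x, f t) a b := by
  refine (hf.norm.absolutelyContinuousOnInterval_intervalIntegral hc).of_dist_le_mul (K := 1) ?_
  intro x hx y hy
  have hcx : IntervalIntegrable f volume c x := hf.mono_set (uIcc_subset_uIcc hc hx)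
  have hcy : IntervalIntegrable f volume c y := hf.mono_set (uIcc_subset_uIcc hc hy)
  rw [one_mul, dist_eq_norm, Real.dist_eq, integral_interval_sub_left hcx hcy,
    integral_interval_sub_left hcx.norm hcy.norm]
  exact norm_integral_le_abs_integral_norm

end AbsolutelyContinuous

/-- Lebesgue's form of `F' = f` on `[a, b]`: `F` is absolutely continuous with derivative `f`. -/
def IsPrimitiveOn {E : Type*} [NormedAddCommGroup E] [NormedSpace ℝ E] (F f : ℝ → E)
    (a b : ℝ) : Prop :=
  IntervalIntegrable f volume a b ∧ ∀ x ∈ uIcc a b, F x = F a + ∫ t in a..x, f t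

namespace IsPrimitiveOn

section Banach

variable {E : Type*} [NormedAddCommGroup E] [NormedSpace ℝ E] {F f : ℝ → E} {a b : ℝ}

theorem absolutelyContinuousOnInterval (h : IsPrimitiveOn F f a b) :
    AbsolutelyContinuousOnInterval F a b :=
  (h.1.absolutelyContinuousOnInterval_primitive left_mem_uIcc).of_dist_le_mul (K := 1)
    fun _ hx _ hy ↦ by rw [h.2 _ hx, h.2 _ hy, dist_add_left, one_mul]

variable [CompleteSpace E]

theorem ae_hasDerivAt (h : IsPrimitiveOn F f a b) :
    ∀ᵐ x, x ∈ uIcc a b → HasDerivAt F (f x) x := by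
  filter_upwards [h.1.ae_hasDerivAt_integral, Measure.ae_ne volume a, Measure.ae_ne volume b]
    with x hx hxa hxb hmem
  have hnhds : uIcc a b ∈ 𝓝 x := by
    rw [uIcc, mem_Icc] at hmem
    refine Icc_mem_nhds (lt_of_le_of_ne hmem.1 ?_) (lt_of_le_of_ne hmem.2 ?_) <;>
      rcases le_total a b with hab | hab <;> simp_all [eq_comm]
  refine ((hx hmem a left_mem_uIcc).const_add (F a)).congr_of_eventuallyEq ?_
  filter_upwards [hnhds] with y hy using h.2 y hy

theorem _root_.AbsolutelyContinuousOnInterval.isPrimitiveOn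
    (hF : AbsolutelyContinuousOnInterval F a b) (hf : IntervalIntegrable f volume a b)
    (hF' : ∀ᵐ x, x ∈ uIcc a b → HasDerivAt F (f x) x) : IsPrimitiveOn F f a b := by
  refine ⟨hf, fun x hx ↦ ?_⟩
  obtain ⟨C, hC⟩ := (hF.sub (hf.absolutelyContinuousOnInterval_primitive left_mem_uIcc))
    |>.const_of_ae_hasDerivAt_zero <| by
      filter_upwards [hF', hf.ae_hasDerivAt_integral] with y hy hy' hmem
      simpa using (hy hmem).sub (hy' hmem a left_mem_uIcc)
  have hCx := hC x hx
  have hCa := hC a left_mem_uIcc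
  simp only [Pi.sub_apply, integral_same, sub_zero] at hCx hCa
  rw [hCa, ← hCx, sub_add_cancel]

end Banach

theorem mul {𝕜 : Type*} [RCLike 𝕜] {F G f g : ℝ → 𝕜} {a b : ℝ}
    (hF : IsPrimitiveOn F f a b) (hG : IsPrimitiveOn G g a b) :
    IsPrimitiveOn (fun x ↦ F x * G x) (fun x ↦ f x * G x + F x * g x) a b :=
  (hF.absolutelyContinuousOnInterval.fun_smul hG.absolutelyContinuousOnInterval).isPrimitiveOn
    ((hF.1.mul_continuousOn hG.absolutelyContinuousOnInterval.continuousOn).add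
      (hG.1.continuousOn_mul hF.absolutelyContinuousOnInterval.continuousOn))
    (by filter_upwards [hF.ae_hasDerivAt, hG.ae_hasDerivAt] with x hFx hGx hx
        using (hFx hx).mul (hGx hx))

theorem exp {G g : ℝ → ℂ} {a b : ℝ} (h : IsPrimitiveOn G g a b) :
    IsPrimitiveOn (fun x ↦ Complex.exp (G x)) (fun x ↦ g x * Complex.exp (G x)) a b := by
  have hG := h.absolutelyContinuousOnInterval
  obtain ⟨C, hC⟩ := hG.exists_bound
  obtain ⟨K, hK⟩ := (contDiff_exp (𝕜 := ℝ) (n := 1)).contDiffOn.exists_lipschitzOnWith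
    one_ne_zero (convex_closedBall 0 C) (isCompact_closedBall 0 C)
  have hexpG : AbsolutelyContinuousOnInterval (fun x ↦ Complex.exp (G x)) a b :=
    hK.comp_absolutelyContinuousOnInterval hG fun x hx ↦ mem_closedBall_zero_iff.2 (hC x hx)
  refine hexpG.isPrimitiveOn (h.1.mul_continuousOn hexpG.continuousOn) ?_
  filter_upwards [h.ae_hasDerivAt] with x hx hmem
  simpa only [mul_comm] using (hx hmem).cexp

end IsPrimitiveOn

theorem MeasureTheory.MemLp.intervalIntegrable {E : Type*} [NormedAddCommGroup E] {f : ℝ → E}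
    {p : ENNReal} {a b : ℝ} (hp : 1 ≤ p) (hab : a ≤ b)
    (hf : MemLp f p (volume.restrict (Icc a b))) : IntervalIntegrable f volume a b :=
  IntegrableOn.intervalIntegrable (by rw [uIcc_of_le hab]; exact hf.integrable hp)

theorem isPrimitiveOn_const_mul_gaugeInt {S : ℝ → ℂ} {b : ℝ} (c : ℂ)
    (hS : IntervalIntegrable S volume 0 b) :
    IsPrimitiveOn (fun t ↦ c * gaugeInt S t) (fun t ↦ c * S t) 0 b :=
  ⟨hS.const_mul c, fun x _ ↦ by simp [gaugeInt, intervalIntegral.integral_const_mul]⟩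

theorem boundary_conditions_gauge_iff (s₁ s₂ a b c d x₀ x₁ y₀ y₁ : ℂ) :
    (x₀ + b * x₁ + a * y₀ = 0 ∧ d * x₁ + c * y₀ + y₁ = 0) ↔
      (x₀ + b * exp (I * s₁) * (exp (-I * s₁) * x₁) + a * y₀ = 0 ∧
        d * exp (I * (s₁ + s₂)) * (exp (-I * s₁) * x₁) + c * exp (I * s₂) * y₀ +
          exp (I * s₂) * y₁ = 0) := by
  have hs₁ : exp (I * s₁) * exp (-I * s₁) = 1 := by rw [← exp_add]; ring_nf; exact exp_zero
  have hs₁₂ : exp (I * (s₁ + s₂)) * exp (-I * s₁) = exp (I * s₂) := by rw [← exp_add]; ring_nf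
  have e₁ : x₀ + b * exp (I * s₁) * (exp (-I * s₁) * x₁) + a * y₀ = x₀ + b * x₁ + a * y₀ := by
    linear_combination (b * x₁) * hs₁
  have e₂ : d * exp (I * (s₁ + s₂)) * (exp (-I * s₁) * x₁) + c * exp (I * s₂) * y₀ +
      exp (I * s₂) * y₁ = exp (I * s₂) * (d * x₁ + c * y₀ + y₁) := by
    linear_combination (d * x₁) * hs₁₂
  rw [e₁, e₂, mul_eq_zero, or_iff_right (exp_ne_zero _)]

theorem stmt17_general (S11 S12 S21 S22 : ℝ → ℂ)
    (hS11 : MemLp S11 2 (volume.restrict (Set.Icc 0 Real.pi)))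
    (hS22 : MemLp S22 2 (volume.restrict (Set.Icc 0 Real.pi)))
    (u₁ u₂ u₁' u₂' : ℝ → ℂ)
    (hu₁' : IntervalIntegrable u₁' volume 0 Real.pi)
    (hu₂' : IntervalIntegrable u₂' volume 0 Real.pi)
    (hu₁ : ∀ x ∈ Set.Icc (0 : ℝ) Real.pi, u₁ x = u₁ 0 + ∫ τ in (0 : ℝ)..x, u₁' τ)
    (hu₂ : ∀ x ∈ Set.Icc (0 : ℝ) Real.pi, u₂ x = u₂ 0 + ∫ τ in (0 : ℝ)..x, u₂' τ)
    (tu₁ tu₂ : ℝ → ℂ)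
    (htu₁ : ∀ t, tu₁ t = Complex.exp (-Complex.I * gaugeInt S11 t) * u₁ t)
    (htu₂ : ∀ t, tu₂ t = Complex.exp (Complex.I * gaugeInt S22 t) * u₂ t) :
    -- `ũ₁, ũ₂` are absolutely continuous, with derivatives `w₁, w₂`, and (i) holds:
    (∃ w₁ w₂ : ℝ → ℂ,
      IntervalIntegrable w₁ volume 0 Real.pi ∧ IntervalIntegrable w₂ volume 0 Real.pi ∧
      (∀ x ∈ Set.Icc (0 : ℝ) Real.pi, tu₁ x = tu₁ 0 + ∫ τ in (0 : ℝ)..x, w₁ τ) ∧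
      (∀ x ∈ Set.Icc (0 : ℝ) Real.pi, tu₂ x = tu₂ 0 + ∫ τ in (0 : ℝ)..x, w₂ τ) ∧
      (∀ᵐ t ∂(volume.restrict (Set.Icc (0 : ℝ) Real.pi)),
        Complex.I * w₁ t +
            S12 t * Complex.exp (-Complex.I * (gaugeInt S11 t + gaugeInt S22 t)) * tu₂ t =
          Complex.exp (-Complex.I * gaugeInt S11 t) *
            (Complex.I * u₁' t + S11 t * u₁ t + S12 t * u₂ t)) ∧
      (∀ᵐ t ∂(volume.restrict (Set.Icc (0 : ℝ) Real.pi)),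
        -Complex.I * w₂ t +
            S21 t * Complex.exp (Complex.I * (gaugeInt S11 t + gaugeInt S22 t)) * tu₁ t =
          Complex.exp (Complex.I * gaugeInt S22 t) *
            (-Complex.I * u₂' t + S21 t * u₁ t + S22 t * u₂ t))) ∧
    -- (ii): equivalence of boundary conditions
    (∀ a b c d : ℂ,
      (u₁ 0 + b * u₁ Real.pi + a * u₂ 0 = 0 ∧
        d * u₁ Real.pi + c * u₂ 0 + u₂ Real.pi = 0) ↔
      (tu₁ 0 + (b * Complex.exp (Complex.I * gaugeInt S11 Real.pi)) * tu₁ Real.pi +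
          a * tu₂ 0 = 0 ∧
        (d * Complex.exp (Complex.I * (gaugeInt S11 Real.pi + gaugeInt S22 Real.pi))) *
            tu₁ Real.pi +
          (c * Complex.exp (Complex.I * gaugeInt S22 Real.pi)) * tu₂ 0 + tu₂ Real.pi = 0)) := by
  have hπ : uIcc 0 Real.pi = Icc 0 Real.pi := uIcc_of_le Real.pi_pos.le
  obtain rfl : tu₁ = _ := funext htu₁
  obtain rfl : tu₂ = _ := funext htu₂
  have h₁ := (isPrimitiveOn_const_mul_gaugeInt (-I)
    (hS11.intervalIntegrable one_le_two Real.pi_pos.le)).exp.mul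
    (show IsPrimitiveOn u₁ u₁' 0 Real.pi from ⟨hu₁', hπ ▸ hu₁⟩)
  have h₂ := (isPrimitiveOn_const_mul_gaugeInt I
    (hS22.intervalIntegrable one_le_two Real.pi_pos.le)).exp.mul
    (show IsPrimitiveOn u₂ u₂' 0 Real.pi from ⟨hu₂', hπ ▸ hu₂⟩)
  have hs₀ (S : ℝ → ℂ) : gaugeInt S 0 = 0 := integral_same
  refine ⟨⟨_, _, h₁.1, h₂.1, hπ ▸ h₁.2, hπ ▸ h₂.2, .of_forall fun t ↦ ?_, .of_forall fun t ↦ ?_⟩,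
    fun a b c d ↦ ?_⟩
  · have hexp : exp (-I * (gaugeInt S11 t + gaugeInt S22 t)) * exp (I * gaugeInt S22 t) =
        exp (-I * gaugeInt S11 t) := by
      rw [← exp_add]; ring_nf
    linear_combination
      (S12 t * u₂ t) * hexp - (S11 t * exp (-I * gaugeInt S11 t) * u₁ t) * I_mul_I
  · have hexp : exp (I * (gaugeInt S11 t + gaugeInt S22 t)) * exp (-I * gaugeInt S11 t) =
        exp (I * gaugeInt S22 t) := by
      rw [← exp_add]; ring_nf
    linear_combination
      (S21 t * u₁ t) * hexp - (S22 t * exp (I * gaugeInt S22 t) * u₂ t) * I_mul_I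
  · simpa only [hs₀, mul_zero, exp_zero, one_mul] using
      boundary_conditions_gauge_iff (gaugeInt S11 Real.pi) (gaugeInt S22 Real.pi) a b c d
        (u₁ 0) (u₁ Real.pi) (u₂ 0) (u₂ Real.pi)

/-- The gauge transform `ũ₁ = e^{−is₁}u₁`, `ũ₂ = e^{is₂}u₂` (with
`s₁ = ∫S₁₁`, `s₂ = ∫S₂₂`) of an absolutely continuous pair `(u₁,u₂)` is absolutely
continuous; it transforms the Dirac system with full matrix potential `S` into the one
with off-diagonal potential `v₁₂ = S₁₂e^{−i(s₁+s₂)}`, `v₂₁ = S₂₁e^{i(s₁+s₂)}` (claim (i)),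
and transforms the boundary conditions `(a,b,c,d)` into `(ã,b̃,c̃,d̃)` with `ã = a`,
`b̃ = b·e^{is₁(π)}`, `c̃ = c·e^{is₂(π)}`, `d̃ = d·e^{i(s₁(π)+s₂(π))}` (claim (ii)). -/
theorem stmt17 (S11 S12 S21 S22 : ℝ → ℂ)
    (hS11 : MemLp S11 2 (volume.restrict (Set.Icc 0 Real.pi)))
    (hS12 : MemLp S12 2 (volume.restrict (Set.Icc 0 Real.pi)))
    (hS21 : MemLp S21 2 (volume.restrict (Set.Icc 0 Real.pi)))
    (hS22 : MemLp S22 2 (volume.restrict (Set.Icc 0 Real.pi)))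
    (u₁ u₂ u₁' u₂' : ℝ → ℂ)
    (hu₁' : IntervalIntegrable u₁' volume 0 Real.pi)
    (hu₂' : IntervalIntegrable u₂' volume 0 Real.pi)
    (hu₁ : ∀ x ∈ Set.Icc (0 : ℝ) Real.pi, u₁ x = u₁ 0 + ∫ τ in (0 : ℝ)..x, u₁' τ)
    (hu₂ : ∀ x ∈ Set.Icc (0 : ℝ) Real.pi, u₂ x = u₂ 0 + ∫ τ in (0 : ℝ)..x, u₂' τ)
    (tu₁ tu₂ : ℝ → ℂ)
    (htu₁ : ∀ t, tu₁ t = Complex.exp (-Complex.I * gaugeInt S11 t) * u₁ t)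
    (htu₂ : ∀ t, tu₂ t = Complex.exp (Complex.I * gaugeInt S22 t) * u₂ t) :
    -- `ũ₁, ũ₂` are absolutely continuous, with derivatives `w₁, w₂`, and (i) holds:
    (∃ w₁ w₂ : ℝ → ℂ,
      IntervalIntegrable w₁ volume 0 Real.pi ∧ IntervalIntegrable w₂ volume 0 Real.pi ∧
      (∀ x ∈ Set.Icc (0 : ℝ) Real.pi, tu₁ x = tu₁ 0 + ∫ τ in (0 : ℝ)..x, w₁ τ) ∧
      (∀ x ∈ Set.Icc (0 : ℝ) Real.pi, tu₂ x = tu₂ 0 + ∫ τ in (0 : ℝ)..x, w₂ τ) ∧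
      (∀ᵐ t ∂(volume.restrict (Set.Icc (0 : ℝ) Real.pi)),
        Complex.I * w₁ t +
            S12 t * Complex.exp (-Complex.I * (gaugeInt S11 t + gaugeInt S22 t)) * tu₂ t =
          Complex.exp (-Complex.I * gaugeInt S11 t) *
            (Complex.I * u₁' t + S11 t * u₁ t + S12 t * u₂ t)) ∧
      (∀ᵐ t ∂(volume.restrict (Set.Icc (0 : ℝ) Real.pi)),
        -Complex.I * w₂ t +
            S21 t * Complex.exp (Complex.I * (gaugeInt S11 t + gaugeInt S22 t)) * tu₁ t =
          Complex.exp (Complex.I * gaugeInt S22 t) *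
            (-Complex.I * u₂' t + S21 t * u₁ t + S22 t * u₂ t))) ∧
    -- (ii): equivalence of boundary conditions
    (∀ a b c d : ℂ,
      (u₁ 0 + b * u₁ Real.pi + a * u₂ 0 = 0 ∧
        d * u₁ Real.pi + c * u₂ 0 + u₂ Real.pi = 0) ↔
      (tu₁ 0 + (b * Complex.exp (Complex.I * gaugeInt S11 Real.pi)) * tu₁ Real.pi +
          a * tu₂ 0 = 0 ∧
        (d * Complex.exp (Complex.I * (gaugeInt S11 Real.pi + gaugeInt S22 Real.pi))) *
            tu₁ Real.pi +
          (c * Complex.exp (Complex.I * gaugeInt S22 Real.pi)) * tu₂ 0 + tu₂ Real.pi = 0)) :=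
  stmt17_general S11 S12 S21 S22 hS11 hS22 u₁ u₂ u₁' u₂' hu₁' hu₂' hu₁ hu₂ tu₁ tu₂ htu₁ htu₂
end
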